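/- Let (u, q_1,…,q_N, r_1,…,r_N) solve the KPESCS and let (g, V, R_1,…,R_N) be an adjoint eigenfunction datum for this solution with g nowhere vanishing. Then the tuple (ṽ, q̃_1,…,q̃_N, r̃_1,…,r̃_N) defined by ṽ := −g_x/g, q̃_j := R_j, and r̃_j := r_j/g solves the mKPESCS with potential Ṽ := −g_y/g. (This is the Bäcklund transformation M_2[g] from the KP hierarchy with self-consistent sources to the mKP hierarchy with self-consistent sources of Theorem 7.2, in the case k=2, n=3.) -/

import Mathlib

noncomputable section

open Finset

abbrev Pt3 : Type := ℝ × ℝ × ℝ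

/-- partial derivative in the first coordinate `x`. -/
def px (F : Pt3 → ℝ) : Pt3 → ℝ := fun p => deriv (fun s => F (s, p.2.1, p.2.2)) p.1

/-- partial derivative in the second coordinate `y`. -/
def py (F : Pt3 → ℝ) : Pt3 → ℝ := fun p => deriv (fun s => F (p.1, s, p.2.2)) p.2.1

/-- partial derivative in the third coordinate `t`. -/
def pt (F : Pt3 → ℝ) : Pt3 → ℝ := fun p => deriv (fun s => F (p.1, p.2.1, s)) p.2.2

/-- The KP equation with self-consistent sources (KPESCS). -/
def SolvesKPESCS (N : ℕ) (u : Pt3 → ℝ) (q r : Fin N → Pt3 → ℝ) : Prop :=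
  (∀ p : Pt3,
      px (fun p' => 4 * pt u p' - 6 * u p' * px u p' - px (px (px u)) p'
            + 8 * px (fun p'' => ∑ j, q j p'' * r j p'') p') p
        - 3 * py (py u) p = 0) ∧
  (∀ j, ∀ p : Pt3, py (q j) p = px (px (q j)) p + u p * q j p) ∧
  (∀ j, ∀ p : Pt3, py (r j) p = -(px (px (r j)) p) - u p * r j p)

/-- An adjoint eigenfunction datum `(g, V, R₁, …, R_N)` for a solution of the KPESCS. -/
def KPAdjointDatum (N : ℕ) (u : Pt3 → ℝ) (q r : Fin N → Pt3 → ℝ)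
    (g V : Pt3 → ℝ) (R : Fin N → Pt3 → ℝ) : Prop :=
  (∀ p : Pt3, px V p = py u p) ∧
  (∀ j, ∀ p : Pt3, px (R j) p = q j p * g p) ∧
  (∀ j, ∀ p : Pt3, py (R j) p = px (q j) p * g p - q j p * px g p) ∧
  (∀ p : Pt3, py g p = -(px (px g) p) - u p * g p) ∧
  (∀ p : Pt3, pt g p = px (px (px g)) p + (3/2) * u p * px g p
      + (3/4) * (px u p - V p) * g p + ∑ j, r j p * R j p)

/-- The mKP equation with self-consistent sources (mKPESCS), with potential `V`
satisfying `V_x = v_y`. -/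
def SolvesMKPESCS (N : ℕ) (v V : Pt3 → ℝ) (q r : Fin N → Pt3 → ℝ) : Prop :=
  (∀ p : Pt3, px V p = py v p) ∧
  (∀ p : Pt3, 4 * pt v p - px (px (px v)) p - 3 * py V p - 6 * V p * px v p
      + 6 * (v p)^2 * px v p + 4 * px (fun p' => ∑ j, q j p' * r j p') p = 0) ∧
  (∀ j, ∀ p : Pt3, py (q j) p = px (px (q j)) p + 2 * v p * px (q j) p) ∧
  (∀ j, ∀ p : Pt3, py (r j) p = -(px (px (r j)) p) + 2 * v p * px (r j) p)

namespace KPtool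

def e1 : Pt3 := ((1:ℝ), (0:ℝ), (0:ℝ))
def e2 : Pt3 := ((0:ℝ), (1:ℝ), (0:ℝ))
def e3 : Pt3 := ((0:ℝ), (0:ℝ), (1:ℝ))

def pd (w : Pt3) (F : Pt3 → ℝ) (p : Pt3) : ℝ := fderiv ℝ F p w

lemma pd_contDiff (w : Pt3) {F : Pt3 → ℝ} (hF : ContDiff ℝ (⊤ : ℕ∞) F) :
    ContDiff ℝ (⊤ : ℕ∞) (pd w F) :=
  (hF.fderiv_right (le_refl _)).clm_apply contDiff_const

lemma hasDerivAt_slice {F : Pt3 → ℝ} {p : Pt3} (hF : DifferentiableAt ℝ F p) (w : Pt3) :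
    HasDerivAt (fun s : ℝ => F (p + s • w)) (pd w F p) 0 := by
  have hline : HasDerivAt (fun s : ℝ => p + s • w) w 0 := by
    simpa using ((hasDerivAt_id (0:ℝ)).smul_const w).const_add p
  have h0 : p + (0:ℝ) • w = p := by simp
  have hF' : DifferentiableAt ℝ F (p + (0:ℝ) • w) := by rwa [h0]
  have h := hF'.hasFDerivAt.comp_hasDerivAt 0 hline
  rw [h0] at h
  exact h

lemma pd_unique {F : Pt3 → ℝ} {p : Pt3} {w : Pt3} {c : ℝ}
    (hF : DifferentiableAt ℝ F p)
    (h : HasDerivAt (fun s : ℝ => F (p + s • w)) c 0) : pd w F p = c :=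
  (hasDerivAt_slice hF w).unique h

lemma pd_neg (w : Pt3) (F : Pt3 → ℝ) (p : Pt3) :
    pd w (fun q => -(F q)) p = -(pd w F p) := by
  simp [pd, fderiv_neg]

lemma pd_add {F G : Pt3 → ℝ} {p : Pt3} (w : Pt3) (hF : DifferentiableAt ℝ F p)
    (hG : DifferentiableAt ℝ G p) :
    pd w (fun q => F q + G q) p = pd w F p + pd w G p := by
  simp [pd, fderiv_fun_add hF hG]

lemma pd_sub {F G : Pt3 → ℝ} {p : Pt3} (w : Pt3) (hF : DifferentiableAt ℝ F p)
    (hG : DifferentiableAt ℝ G p) :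
    pd w (fun q => F q - G q) p = pd w F p - pd w G p := by
  simp [pd, fderiv_fun_sub hF hG]

lemma pd_mul {F G : Pt3 → ℝ} {p : Pt3} (w : Pt3) (hF : DifferentiableAt ℝ F p)
    (hG : DifferentiableAt ℝ G p) :
    pd w (fun q => F q * G q) p = pd w F p * G p + F p * pd w G p := by
  simp [pd, fderiv_fun_mul hF hG]; ring

lemma pd_const (w : Pt3) (c : ℝ) (p : Pt3) : pd w (fun _ => c) p = 0 := by
  simp [pd]

lemma pd_const_mul {F : Pt3 → ℝ} {p : Pt3} (w : Pt3) (hF : DifferentiableAt ℝ F p) (c : ℝ) :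
    pd w (fun q => c * F q) p = c * pd w F p := by
  simp [pd, fderiv_const_mul hF]

lemma pd_div {F G : Pt3 → ℝ} {p : Pt3} (w : Pt3) (hF : DifferentiableAt ℝ F p)
    (hG : DifferentiableAt ℝ G p) (h0 : G p ≠ 0) :
    pd w (fun q => F q / G q) p = (pd w F p * G p - F p * pd w G p) / (G p * G p) := by
  have hdiv : DifferentiableAt ℝ (fun q => F q / G q) p := by
    simp only [div_eq_mul_inv]; exact hF.mul (hG.inv h0)
  refine pd_unique hdiv ?_
  have := (hasDerivAt_slice hF w).div (hasDerivAt_slice hG w) (by simpa using h0)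
  simp only [zero_smul, add_zero] at this
  rw [sq] at this
  exact this

lemma pd_sum {ι : Type*} [Fintype ι] {A : ι → Pt3 → ℝ} {p : Pt3} (w : Pt3)
    (hA : ∀ j, DifferentiableAt ℝ (A j) p) :
    pd w (fun q => ∑ j, A j q) p = ∑ j, pd w (A j) p := by
  simp [pd, fderiv_fun_sum (fun j _ => hA j)]

lemma px_eq {F : Pt3 → ℝ} (hF : ContDiff ℝ (⊤ : ℕ∞) F) : px F = pd e1 F := by
  funext p
  have hc : HasDerivAt (fun s : ℝ => ((s, p.2.1, p.2.2) : Pt3)) e1 p.1 :=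
    (hasDerivAt_id p.1).prodMk ((hasDerivAt_const _ _).prodMk (hasDerivAt_const _ _))
  have hp : ((p.1, p.2.1, p.2.2) : Pt3) = p := rfl
  have hd : DifferentiableAt ℝ F ((p.1, p.2.1, p.2.2) : Pt3) := by
    rw [hp]; exact (hF.differentiable (by simp)).differentiableAt
  have h := hd.hasFDerivAt.comp_hasDerivAt p.1 hc
  rw [hp] at h
  have h2 : HasDerivAt (fun s : ℝ => F (s, p.2.1, p.2.2)) (fderiv ℝ F p e1) p.1 := h
  unfold px pd
  exact h2.deriv

lemma py_eq {F : Pt3 → ℝ} (hF : ContDiff ℝ (⊤ : ℕ∞) F) : py F = pd e2 F := by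
  funext p
  have hc : HasDerivAt (fun s : ℝ => ((p.1, s, p.2.2) : Pt3)) e2 p.2.1 :=
    (hasDerivAt_const _ _).prodMk ((hasDerivAt_id p.2.1).prodMk (hasDerivAt_const _ _))
  have hp : ((p.1, p.2.1, p.2.2) : Pt3) = p := rfl
  have hd : DifferentiableAt ℝ F ((p.1, p.2.1, p.2.2) : Pt3) := by
    rw [hp]; exact (hF.differentiable (by simp)).differentiableAt
  have h := hd.hasFDerivAt.comp_hasDerivAt p.2.1 hc
  rw [hp] at h
  have h2 : HasDerivAt (fun s : ℝ => F (p.1, s, p.2.2)) (fderiv ℝ F p e2) p.2.1 := h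
  unfold py pd
  exact h2.deriv

lemma pt_eq {F : Pt3 → ℝ} (hF : ContDiff ℝ (⊤ : ℕ∞) F) : pt F = pd e3 F := by
  funext p
  have hc : HasDerivAt (fun s : ℝ => ((p.1, p.2.1, s) : Pt3)) e3 p.2.2 :=
    (hasDerivAt_const _ _).prodMk ((hasDerivAt_const _ _).prodMk (hasDerivAt_id p.2.2))
  have hp : ((p.1, p.2.1, p.2.2) : Pt3) = p := rfl
  have hd : DifferentiableAt ℝ F ((p.1, p.2.1, p.2.2) : Pt3) := by
    rw [hp]; exact (hF.differentiable (by simp)).differentiableAt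
  have h := hd.hasFDerivAt.comp_hasDerivAt p.2.2 hc
  rw [hp] at h
  have h2 : HasDerivAt (fun s : ℝ => F (p.1, p.2.1, s)) (fderiv ℝ F p e3) p.2.2 := h
  unfold pt pd
  exact h2.deriv

lemma pd_comm {F : Pt3 → ℝ} (hF : ContDiff ℝ (⊤ : ℕ∞) F) (a b : Pt3) (p : Pt3) :
    pd a (pd b F) p = pd b (pd a F) p := by
  have hdf : Differentiable ℝ (fderiv ℝ F) :=
    (hF.fderiv_right (m := (⊤ : ℕ∞)) (le_refl _)).differentiable (by simp)
  have key : ∀ c : Pt3, fderiv ℝ (fun q => fderiv ℝ F q c) p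
      = (fderiv ℝ (fderiv ℝ F) p).flip c := by
    intro c
    rw [fderiv_clm_apply (hdf p) (differentiableAt_const c)]
    simp
  have hsymm := second_derivative_symmetric
    (fun y => ((hF.differentiable (by simp)) y).hasFDerivAt)
    ((hdf p).hasFDerivAt) a b
  show fderiv ℝ (fun q => fderiv ℝ F q b) p a = fderiv ℝ (fun q => fderiv ℝ F q a) p b
  rw [key a, key b]
  simp only [ContinuousLinearMap.flip_apply]
  exact hsymm


lemma cd {F : Pt3 → ℝ} (hF : ContDiff ℝ (⊤ : ℕ∞) F) (p : Pt3) : DifferentiableAt ℝ F p :=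
  (hF.differentiable (by simp)).differentiableAt

lemma diffAt_div {F G : Pt3 → ℝ} {p : Pt3} (hF : DifferentiableAt ℝ F p)
    (hG : DifferentiableAt ℝ G p) (h0 : G p ≠ 0) :
    DifferentiableAt ℝ (fun q => F q / G q) p := by
  simp only [div_eq_mul_inv]; exact hF.mul (hG.inv h0)

end KPtool

open KPtool

set_option maxHeartbeats 2000000 in
theorem kp_to_mkp_Backlund_M2 (N : ℕ) (u g V : Pt3 → ℝ) (q r R : Fin N → Pt3 → ℝ)
    (hu : ContDiff ℝ (⊤ : ℕ∞) u) (hq : ∀ j, ContDiff ℝ (⊤ : ℕ∞) (q j)) (hr : ∀ j, ContDiff ℝ (⊤ : ℕ∞) (r j))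
    (hg : ContDiff ℝ (⊤ : ℕ∞) g) (hV : ContDiff ℝ (⊤ : ℕ∞) V) (hR : ∀ j, ContDiff ℝ (⊤ : ℕ∞) (R j))
    (hsol : SolvesKPESCS N u q r)
    (hdat : KPAdjointDatum N u q r g V R)
    (hg0 : ∀ p : Pt3, g p ≠ 0) :
    SolvesMKPESCS N
      (fun p => -(px g p / g p))
      (fun p => -(py g p / g p))
      (fun j => fun p => R j p)
      (fun j => fun p => r j p / g p) := by
  classical
  obtain ⟨-, hqy, hry⟩ := hsol
  obtain ⟨hVx, hRx, hRy, hgy, hgt⟩ := hdat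
  have hg1 : ContDiff ℝ (⊤ : ℕ∞) (pd e1 g) := pd_contDiff e1 hg
  have hg2 : ContDiff ℝ (⊤ : ℕ∞) (pd e1 (pd e1 g)) := pd_contDiff e1 hg1
  have hg3 : ContDiff ℝ (⊤ : ℕ∞) (pd e1 (pd e1 (pd e1 g))) := pd_contDiff e1 hg2
  have hgy2 : ContDiff ℝ (⊤ : ℕ∞) (pd e2 g) := pd_contDiff e2 hg
  have hu1 : ContDiff ℝ (⊤ : ℕ∞) (pd e1 u) := pd_contDiff e1 hu
  have hu2 : ContDiff ℝ (⊤ : ℕ∞) (pd e1 (pd e1 u)) := pd_contDiff e1 hu1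
  have hr1 : ∀ j, ContDiff ℝ (⊤ : ℕ∞) (pd e1 (r j)) := fun j => pd_contDiff e1 (hr j)
  have hq1 : ∀ j, ContDiff ℝ (⊤ : ℕ∞) (pd e1 (q j)) := fun j => pd_contDiff e1 (hq j)
  have hR1 : ∀ j, ContDiff ℝ (⊤ : ℕ∞) (pd e1 (R j)) := fun j => pd_contDiff e1 (hR j)
  simp only [py_eq hg, px_eq hg, px_eq hg1, px_eq hg2, pt_eq hg, px_eq hu] at hgy hgt
  simp only [px_eq hV, py_eq hu] at hVx
  have HRx : ∀ j, pd e1 (R j) = fun p => q j p * g p := by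
    intro j; funext p
    have h := hRx j p; rwa [px_eq (hR j)] at h
  have HRy : ∀ j, ∀ p : Pt3, pd e2 (R j) p = pd e1 (q j) p * g p - q j p * pd e1 g p := by
    intro j p
    have h := hRy j p; rwa [py_eq (hR j), px_eq (hq j), px_eq hg] at h
  have Hry : ∀ j, ∀ p : Pt3, pd e2 (r j) p = -(pd e1 (pd e1 (r j)) p) - u p * r j p := by
    intro j p
    have h := hry j p
    rwa [py_eq (hr j), px_eq (hr j), px_eq (pd_contDiff e1 (hr j))] at h
  have Hgy : pd e2 g = fun p => -(pd e1 (pd e1 g) p) - u p * g p := funext hgy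
  have Hgt : pd e3 g = fun p => pd e1 (pd e1 (pd e1 g)) p + 3 / 2 * u p * pd e1 g p
      + 3 / 4 * (pd e1 u p - V p) * g p + ∑ j, r j p * R j p := funext hgt
  have HgyL1 : pd e1 (fun p => -(pd e1 (pd e1 g) p) - u p * g p)
      = fun p => -(pd e1 (pd e1 (pd e1 g)) p) - (pd e1 u p * g p + u p * pd e1 g p) := by
    funext p
    rw [pd_sub e1 ((cd hg2 p).fun_neg) ((cd hu p).fun_mul (cd hg p)), pd_neg,
      pd_mul e1 (cd hu p) (cd hg p)]
  have Hv1 : pd e1 (fun p => -(pd e1 g p / g p))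
      = fun p => (pd e1 g p * pd e1 g p - pd e1 (pd e1 g) p * g p) / (g p * g p) := by
    funext p
    rw [pd_neg, pd_div e1 (cd hg1 p) (cd hg p) (hg0 p)]
    try field_simp [hg0 p]
    try ring
  have Hv2 : pd e1 (pd e1 (fun p => -(pd e1 g p / g p)))
      = fun p => (3 * pd e1 g p * pd e1 (pd e1 g) p * g p
          - pd e1 (pd e1 (pd e1 g)) p * g p * g p
          - 2 * pd e1 g p * pd e1 g p * pd e1 g p) / (g p * g p * g p) := by
    rw [Hv1]; funext p
    rw [pd_div e1 (((cd hg1 p).fun_mul (cd hg1 p)).fun_sub ((cd hg2 p).fun_mul (cd hg p)))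
        ((cd hg p).fun_mul (cd hg p)) (mul_ne_zero (hg0 p) (hg0 p)),
      pd_sub e1 ((cd hg1 p).fun_mul (cd hg1 p)) ((cd hg2 p).fun_mul (cd hg p)),
      pd_mul e1 (cd hg1 p) (cd hg1 p), pd_mul e1 (cd hg2 p) (cd hg p),
      pd_mul e1 (cd hg p) (cd hg p)]
    try field_simp [hg0 p]
    try ring
  refine ⟨?_, ?_, ?_, ?_⟩
  · -- potential equation
    intro p
    simp only [py_eq hg, px_eq hg]
    rw [px_eq ((hgy2.fun_div hg hg0).neg), py_eq ((hg1.fun_div hg hg0).neg)]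
    simp only [pd_neg]
    rw [pd_div e1 (cd hgy2 p) (cd hg p) (hg0 p), pd_div e2 (cd hg1 p) (cd hg p) (hg0 p),
      pd_comm hg e1 e2 p]
    ring
  · -- main mKP equation
    intro p
    have hvL : ContDiff ℝ (⊤ : ℕ∞) (fun p' => -(pd e1 g p' / g p')) := (hg1.div hg hg0).neg
    have hWL : ContDiff ℝ (⊤ : ℕ∞) (fun p' => -(pd e2 g p' / g p')) := (hgy2.div hg hg0).neg
    have hSL : ContDiff ℝ (⊤ : ℕ∞) (fun p' => ∑ j, R j p' * (r j p' / g p')) :=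
      ContDiff.sum fun j _ => (hR j).mul ((hr j).div hg hg0)
    beta_reduce
    simp only [px_eq hg, py_eq hg]
    rw [pt_eq hvL, py_eq hWL, px_eq hSL, px_eq hvL, px_eq (pd_contDiff e1 hvL),
        px_eq (pd_contDiff e1 (pd_contDiff e1 hvL))]
    -- third x-derivative of v
    rw [Hv2]
    simp only [Hv1]
    rw [pd_div e1
        (((((cd hg1 p).const_mul 3).fun_mul (cd hg2 p)).fun_mul (cd hg p)).fun_sub
            (((cd hg3 p).fun_mul (cd hg p)).fun_mul (cd hg p)) |>.fun_sub
          ((((cd hg1 p).const_mul 2).fun_mul (cd hg1 p)).fun_mul (cd hg1 p)))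
        (((cd hg p).fun_mul (cd hg p)).fun_mul (cd hg p))
        (mul_ne_zero (mul_ne_zero (hg0 p) (hg0 p)) (hg0 p)),
      pd_sub e1
        ((((cd hg1 p).const_mul 3).fun_mul (cd hg2 p)).fun_mul (cd hg p) |>.fun_sub
          (((cd hg3 p).fun_mul (cd hg p)).fun_mul (cd hg p)))
        ((((cd hg1 p).const_mul 2).fun_mul (cd hg1 p)).fun_mul (cd hg1 p)),
      pd_sub e1 ((((cd hg1 p).const_mul 3).fun_mul (cd hg2 p)).fun_mul (cd hg p))
        (((cd hg3 p).fun_mul (cd hg p)).fun_mul (cd hg p)),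
      pd_mul e1 (((cd hg1 p).const_mul 3).fun_mul (cd hg2 p)) (cd hg p),
      pd_mul e1 ((cd hg1 p).const_mul 3) (cd hg2 p),
      pd_const_mul e1 (cd hg1 p) 3,
      pd_mul e1 ((cd hg3 p).fun_mul (cd hg p)) (cd hg p),
      pd_mul e1 (cd hg3 p) (cd hg p),
      pd_mul e1 (((cd hg1 p).const_mul 2).fun_mul (cd hg1 p)) (cd hg1 p),
      pd_mul e1 ((cd hg1 p).const_mul 2) (cd hg1 p),
      pd_const_mul e1 (cd hg1 p) 2,
      pd_mul e1 ((cd hg p).fun_mul (cd hg p)) (cd hg p),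
      pd_mul e1 (cd hg p) (cd hg p)]
    -- t-derivative of v and y-derivative of Vtilde
    simp only [pd_neg]
    rw [pd_div e3 (cd hg1 p) (cd hg p) (hg0 p), pd_div e2 (cd hgy2 p) (cd hg p) (hg0 p),
      pd_comm hg e3 e1 p]
    simp only [Hgt]
    rw [pd_add e1
        (((cd hg3 p).fun_add (((cd hu p).const_mul (3 / 2)).fun_mul (cd hg1 p))).fun_add
          ((((cd hu1 p).fun_sub (cd hV p)).const_mul (3 / 4)).fun_mul (cd hg p)))
        (DifferentiableAt.fun_sum fun j _ => (cd (hr j) p).fun_mul (cd (hR j) p)),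
      pd_add e1 ((cd hg3 p).fun_add (((cd hu p).const_mul (3 / 2)).fun_mul (cd hg1 p)))
        ((((cd hu1 p).fun_sub (cd hV p)).const_mul (3 / 4)).fun_mul (cd hg p)),
      pd_add e1 (cd hg3 p) (((cd hu p).const_mul (3 / 2)).fun_mul (cd hg1 p)),
      pd_mul e1 ((cd hu p).const_mul (3 / 2)) (cd hg1 p),
      pd_const_mul e1 (cd hu p) (3 / 2),
      pd_mul e1 (((cd hu1 p).fun_sub (cd hV p)).const_mul (3 / 4)) (cd hg p),
      pd_const_mul e1 ((cd hu1 p).fun_sub (cd hV p)) (3 / 4),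
      pd_sub e1 (cd hu1 p) (cd hV p), hVx p]
    simp only [pd_sum e1 (fun j => (cd (hr j) p).fun_mul (cd (hR j) p))]
    have hsum1 : (∑ j, pd e1 (fun p' => r j p' * R j p') p)
        = (∑ j, pd e1 (r j) p * R j p) + (∑ j, q j p * r j p) * g p := by
      have h1 : ∀ j ∈ (Finset.univ : Finset (Fin N)), pd e1 (fun p' => r j p' * R j p') p
          = pd e1 (r j) p * R j p + q j p * r j p * g p := fun j _ => by
        rw [pd_mul e1 (cd (hr j) p) (cd (hR j) p), congrFun (HRx j) p]; ring
      rw [Finset.sum_congr rfl h1, Finset.sum_add_distrib, ← Finset.sum_mul]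
    rw [hsum1]
    -- y-part
    simp only [Hgy]
    rw [pd_sub e2 ((cd hg2 p).fun_neg) ((cd hu p).fun_mul (cd hg p))]
    simp only [pd_neg]
    rw [pd_mul e2 (cd hu p) (cd hg p)]
    simp only [Hgy]
    have hswap : pd e2 (pd e1 g) = pd e1 (pd e2 g) := funext fun p' => pd_comm hg e2 e1 p'
    have hc21 : pd e2 (pd e1 (pd e1 g)) p = pd e1 (pd e1 (pd e2 g)) p := by
      rw [pd_comm hg1 e2 e1 p, hswap]
    rw [hc21]
    simp only [Hgy, HgyL1]
    rw [pd_sub e1 ((cd hg3 p).fun_neg)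
        (((cd hu1 p).fun_mul (cd hg p)).fun_add ((cd hu p).fun_mul (cd hg1 p)))]
    simp only [pd_neg]
    rw [pd_add e1 ((cd hu1 p).fun_mul (cd hg p)) ((cd hu p).fun_mul (cd hg1 p)),
      pd_mul e1 (cd hu1 p) (cd hg p), pd_mul e1 (cd hu p) (cd hg1 p)]
    -- source sum
    simp only [pd_sum e1 (fun j => (cd (hR j) p).fun_mul (diffAt_div (cd (hr j) p) (cd hg p) (hg0 p)))]
    have hsum2 : (∑ j, pd e1 (fun p' => R j p' * (r j p' / g p')) p)
        = (∑ j, q j p * r j p) + (∑ j, pd e1 (r j) p * R j p) / g p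
          - (∑ j, r j p * R j p) * (pd e1 g p / (g p * g p)) := by
      have h1 : ∀ j ∈ (Finset.univ : Finset (Fin N)), pd e1 (fun p' => R j p' * (r j p' / g p')) p
          = q j p * r j p + pd e1 (r j) p * R j p / g p
            - r j p * R j p * (pd e1 g p / (g p * g p)) := fun j _ => by
        rw [pd_mul e1 (cd (hR j) p) (diffAt_div (cd (hr j) p) (cd hg p) (hg0 p)),
          pd_div e1 (cd (hr j) p) (cd hg p) (hg0 p), congrFun (HRx j) p]
        field_simp [hg0 p]
        ring
      rw [Finset.sum_congr rfl h1, Finset.sum_sub_distrib, Finset.sum_add_distrib,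
        ← Finset.sum_div, ← Finset.sum_mul]
    rw [hsum2]
    have hG := hg0 p
    ring_nf
    field_simp [hG]
    ring
  · -- eigenfunction equation
    intro j p
    show py (R j) p = px (px (R j)) p + 2 * -(px g p / g p) * px (R j) p
    rw [py_eq (hR j), px_eq (hR j), px_eq (hR1 j), px_eq hg]
    rw [HRy j p]
    simp only [HRx]
    rw [pd_mul e1 (cd (hq j) p) (cd hg p)]
    field_simp [hg0 p]
    ring
  · -- adjoint eigenfunction equation
    intro j p
    show py (fun p' => r j p' / g p') p
        = -(px (px (fun p' => r j p' / g p')) p)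
          + 2 * -(px g p / g p) * px (fun p' => r j p' / g p') p
    have hrg : ContDiff ℝ (⊤ : ℕ∞) (fun p' => r j p' / g p') := (hr j).div hg hg0
    rw [py_eq hrg, px_eq hrg, px_eq (pd_contDiff e1 hrg), px_eq hg]
    have HF1 : pd e1 (fun p' => r j p' / g p')
        = fun p' => (pd e1 (r j) p' * g p' - r j p' * pd e1 g p') / (g p' * g p') :=
      funext fun p' => pd_div e1 (cd (hr j) p') (cd hg p') (hg0 p')
    simp only [HF1]
    rw [pd_div e2 (cd (hr j) p) (cd hg p) (hg0 p)]
    rw [pd_div e1 (((cd (hr1 j) p).fun_mul (cd hg p)).fun_sub ((cd (hr j) p).fun_mul (cd hg1 p)))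
        ((cd hg p).fun_mul (cd hg p)) (mul_ne_zero (hg0 p) (hg0 p)),
      pd_sub e1 ((cd (hr1 j) p).fun_mul (cd hg p)) ((cd (hr j) p).fun_mul (cd hg1 p)),
      pd_mul e1 (cd (hr1 j) p) (cd hg p), pd_mul e1 (cd (hr j) p) (cd hg1 p),
      pd_mul e1 (cd hg p) (cd hg p)]
    rw [Hry j p]
    simp only [Hgy]
    field_simp [hg0 p]
    ring
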